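/- Let q ∈ ℂ with 0 < |q| < 1. For m, n ∈ ℤ with m − n even and k₁, k₂ ∈ ℕ, one has h(ζ^{k₁} · E_{m,n}* · E_{m,n} · ζ^{k₂}) = |q|^{−(m+n)} · conj( h( E_{m,n} · ζ^{k₁+k₂} · E_{m,n}* ) ); that is, ⟨E_{m,n}ζ^{k₁}, E_{m,n}ζ^{k₂}⟩_L = |q|^{−m−n}·⟨E_{m,n}ζ^{k₁}, E_{m,n}ζ^{k₂}⟩_R, where ⟨x,y⟩_L = h(x*y) and ⟨x,y⟩_R = conj(h(x y*)). -/

import Mathlib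

open scoped ComplexConjugate

noncomputable section

/-- The Hilbert space `H = ℓ²(ℕ × ℤ × ℤ)` over `ℂ`. -/
abbrev H : Type := lp (fun _ : ℕ × ℤ × ℤ => ℂ) 2

/-- The standard orthonormal basis vectors of `H`. -/
noncomputable def e (i : ℕ × ℤ × ℤ) : H := lp.single 2 i 1

/-- The Haar state `h(x) = (1-|q|²) Σ_{n≥0} |q|^{2n} ⟨e_{n,0,0}, x e_{n,0,0}⟩`. -/
noncomputable def haar (q : ℂ) (x : H →L[ℂ] H) : ℂ :=
  (1 - (‖q‖ : ℂ) ^ 2) *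
    ∑' n : ℕ, ((‖q‖ : ℂ) ^ (2 * n)) *
      inner (𝕜 := ℂ) (e (n, 0, 0)) (x (e (n, 0, 0)))

/-- The element `E_{m,n}` (for `m - n` even): `A^{(m+n)/2} B^{(m-n)/2}` etc., according to
the signs of `m + n` and `m - n`. -/
noncomputable def Emn (A B : H →L[ℂ] H) (m n : ℤ) : H →L[ℂ] H :=
  if 0 ≤ m + n then
    (if n ≤ m then A ^ ((m + n) / 2).toNat * B ^ ((m - n) / 2).toNat
     else A ^ ((m + n) / 2).toNat * (star B) ^ ((n - m) / 2).toNat)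
  else
    (if n ≤ m then B ^ ((m - n) / 2).toNat * (star A) ^ ((-(m + n)) / 2).toNat
     else (star B) ^ ((n - m) / 2).toNat * (star A) ^ ((-(m + n)) / 2).toNat)

lemma e_apply (i j : ℕ × ℤ × ℤ) : (e i : ∀ _ : ℕ × ℤ × ℤ, ℂ) j = if j = i then 1 else 0 := by
  simp [e, lp.single_apply, Pi.single_apply]

lemma inner_e (i : ℕ × ℤ × ℤ) (x : H) : inner (𝕜 := ℂ) (e i) x = x i := by
  simp [e, lp.inner_single_left]

lemma star_apply_e (T : H →L[ℂ] H) (i j : ℕ × ℤ × ℤ) :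
    ((star T) (e i) : ∀ _ : ℕ × ℤ × ℤ, ℂ) j = conj ((T (e j) : ∀ _ : ℕ × ℤ × ℤ, ℂ) i) := by
  rw [← inner_e j]
  rw [ContinuousLinearMap.star_eq_adjoint, ContinuousLinearMap.adjoint_inner_right]
  rw [← inner_e i (T (e j)), ← inner_conj_symm]

lemma star_shift (C : H →L[ℂ] H) (w : ℂ) (ε : ℤ)
    (hC : ∀ (n : ℕ) (r s : ℤ), C (e (n, r, s)) = (w ^ n) • e (n, r + ε, s))
    (n : ℕ) (r s : ℤ) :
    (star C) (e (n, r, s)) = ((conj w) ^ n) • e (n, r - ε, s) := by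
  apply lp.ext
  funext j
  obtain ⟨n', r', s'⟩ := j
  rw [star_apply_e, hC]
  simp only [lp.coeFn_smul, Pi.smul_apply, e_apply, smul_eq_mul, Prod.mk.injEq, mul_ite,
    mul_one, mul_zero, apply_ite conj, map_pow, map_zero]
  split_ifs with h1 h2 h2
  · rw [h1.1]
  · exact absurd ⟨h1.1.symm, by omega, h1.2.2.symm⟩ h2
  · exact absurd ⟨h2.1.symm, by omega, h2.2.2.symm⟩ h1
  · rfl

lemma star_raise (A : H →L[ℂ] H) (t : ℝ)
    (hA : ∀ (n : ℕ) (r s : ℤ), A (e (n, r, s)) =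
      ((Real.sqrt (1 - t ^ (2 * (n + 1))) : ℝ) : ℂ) • e (n + 1, r, s))
    (n : ℕ) (r s : ℤ) :
    (star A) (e (n, r, s)) = ((Real.sqrt (1 - t ^ (2 * n)) : ℝ) : ℂ) • e (n - 1, r, s) := by
  apply lp.ext
  funext j
  obtain ⟨n', r', s'⟩ := j
  rw [star_apply_e, hA]
  simp only [lp.coeFn_smul, Pi.smul_apply, e_apply, smul_eq_mul, Prod.mk.injEq, mul_ite,
    mul_one, mul_zero, apply_ite conj, Complex.conj_ofReal, map_zero]
  split_ifs with h1 h2 h2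
  · rw [h1.1]
  · exact absurd ⟨by omega, h1.2.1.symm, h1.2.2.symm⟩ h2
  · match n, h2, h1 with
    | 0, h2, h1 => norm_num
    | (m+1), h2, h1 => exact absurd ⟨by omega, h2.2.1.symm, h2.2.2.symm⟩ h1
  · rfl

lemma shift_pow (C : H →L[ℂ] H) (w : ℂ) (ε : ℤ)
    (hC : ∀ (n : ℕ) (r s : ℤ), C (e (n, r, s)) = (w ^ n) • e (n, r + ε, s))
    (d n : ℕ) (r s : ℤ) :
    (C ^ d) (e (n, r, s)) = (w ^ (n * d)) • e (n, r + d * ε, s) := by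
  induction d with
  | zero => simp
  | succ d ih =>
      rw [pow_succ', ContinuousLinearMap.mul_apply, ih, map_smul, hC, smul_smul,
        ← pow_add]
      have h1 : r + (d : ℤ) * ε + ε = r + ((d : ℕ) + 1 : ℕ) * ε := by push_cast; ring
      rw [h1]
      congr 2

noncomputable def sA (t : ℝ) (p n : ℕ) : ℝ :=
  ∏ i ∈ Finset.range p, Real.sqrt (1 - t ^ (2 * (n + i + 1)))

noncomputable def sA' (t : ℝ) (p n : ℕ) : ℝ :=
  ∏ i ∈ Finset.range p, Real.sqrt (1 - t ^ (2 * (n - i)))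

lemma raise_pow (A : H →L[ℂ] H) (t : ℝ)
    (hA : ∀ (n : ℕ) (r s : ℤ), A (e (n, r, s)) =
      ((Real.sqrt (1 - t ^ (2 * (n + 1))) : ℝ) : ℂ) • e (n + 1, r, s))
    (p n : ℕ) (r s : ℤ) :
    (A ^ p) (e (n, r, s)) = ((sA t p n : ℝ) : ℂ) • e (n + p, r, s) := by
  induction p with
  | zero => simp [sA]
  | succ p ih =>
      rw [pow_succ', ContinuousLinearMap.mul_apply, ih, map_smul, hA, smul_smul,
        show sA t (p + 1) n = sA t p n * Real.sqrt (1 - t ^ (2 * (n + p + 1))) from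
          Finset.prod_range_succ _ p]
      push_cast
      congr 2

lemma star_raise_pow (A : H →L[ℂ] H) (t : ℝ)
    (hA : ∀ (n : ℕ) (r s : ℤ), A (e (n, r, s)) =
      ((Real.sqrt (1 - t ^ (2 * (n + 1))) : ℝ) : ℂ) • e (n + 1, r, s))
    (p n : ℕ) (r s : ℤ) :
    ((star A) ^ p) (e (n, r, s)) = ((sA' t p n : ℝ) : ℂ) • e (n - p, r, s) := by
  induction p with
  | zero => simp [sA']
  | succ p ih =>
      rw [pow_succ', ContinuousLinearMap.mul_apply, ih, map_smul, star_raise A t hA, smul_smul,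
        show sA' t (p + 1) n = sA' t p n * Real.sqrt (1 - t ^ (2 * (n - p))) from
          Finset.prod_range_succ _ p]
      push_cast
      congr 2

lemma sA'_eq_zero (t : ℝ) (p n : ℕ) (h : n < p) : sA' t p n = 0 := by
  apply Finset.prod_eq_zero (Finset.mem_range.2 h)
  norm_num

lemma sA'_shift (t : ℝ) (p n : ℕ) : sA' t p (n + p) = sA t p n := by
  rw [sA', sA,
    ← Finset.prod_range_reflect (fun j => Real.sqrt (1 - t ^ (2 * (n + j + 1)))) p]
  apply Finset.prod_congr rfl
  intro i hi
  have := Finset.mem_range.1 hi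
  have h3 : n + p - i = n + (p - 1 - i) + 1 := by omega
  rw [h3]

lemma sA'_eq (t : ℝ) (p n : ℕ) (h : p ≤ n) : sA' t p n = sA t p (n - p) := by
  have h2 := sA'_shift t p (n - p)
  rwa [Nat.sub_add_cancel h] at h2

lemma haar_ofReal (q : ℂ) (x : H →L[ℂ] H) (F : ℕ → ℝ)
    (hF : ∀ n : ℕ, inner (𝕜 := ℂ) (e (n, 0, 0)) (x (e (n, 0, 0))) = ((F n : ℝ) : ℂ)) :
    haar q x = (((1 - (‖q‖) ^ 2) *
      ∑' n : ℕ, (‖q‖) ^ (2 * n) * F n : ℝ) : ℂ) := by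
  rw [haar]
  push_cast [Complex.ofReal_tsum]
  congr 1
  exact tsum_congr fun n => by rw [hF n]

lemma inner_e_smul (i j : ℕ × ℤ × ℤ) (c : ℂ) :
    inner (𝕜 := ℂ) (e i) (c • e j) = if i = j then c else 0 := by
  rw [inner_e]
  have : ((c • e j : H) : ∀ _ : ℕ × ℤ × ℤ, ℂ) i = c * ((e j : ∀ _ : ℕ × ℤ × ℤ, ℂ) i) := by
    simp [lp.coeFn_smul]
  rw [this, e_apply]
  simp

lemma star_shift_pow (C : H →L[ℂ] H) (w : ℂ) (ε : ℤ)
    (hC : ∀ (n : ℕ) (r s : ℤ), C (e (n, r, s)) = (w ^ n) • e (n, r + ε, s))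
    (d n : ℕ) (r s : ℤ) :
    ((star C) ^ d) (e (n, r, s)) = ((conj w) ^ (n * d)) • e (n, r - d * ε, s) := by
  have hsC' : ∀ (n : ℕ) (r s : ℤ), (star C) (e (n, r, s)) =
      ((conj w) ^ n) • e (n, r + (-ε), s) := by
    intro n r s
    rw [star_shift C w ε hC, sub_eq_add_neg]
  rw [shift_pow (star C) (conj w) (-ε) hsC',
    show r + (d : ℤ) * (-ε) = r - (d : ℤ) * ε by ring]

lemma diag_pow (Z : H →L[ℂ] H) (c : ℕ → ℝ)
    (hZ1 : ∀ (n : ℕ) (r s : ℤ), Z (e (n, r, s)) = ((c n : ℝ) : ℂ) • e (n, r, s))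
    (k n : ℕ) (r s : ℤ) :
    (Z ^ k) (e (n, r, s)) = ((c n ^ k : ℝ) : ℂ) • e (n, r, s) := by
  induction k with
  | zero => simp
  | succ k ih =>
      rw [pow_succ', ContinuousLinearMap.mul_apply, ih, map_smul, hZ1, smul_smul]
      push_cast
      ring_nf

lemma mulconj (w q : ℂ) (hw : ‖w‖ = ‖q‖) (m : ℕ) :
    w ^ m * (conj w) ^ m = ((‖q‖ : ℝ) : ℂ) ^ (2 * m) := by
  rw [← mul_pow, Complex.mul_conj, Complex.normSq_eq_norm_sq, hw, pow_mul]
  push_cast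
  ring

lemma case_pos (q : ℂ) (A C Z : H →L[ℂ] H) (w : ℂ) (hw : ‖w‖ = ‖q‖)
    (ε : ℤ)
    (hA : ∀ (n : ℕ) (r s : ℤ), A (e (n, r, s)) =
      ((Real.sqrt (1 - ‖q‖ ^ (2 * (n + 1))) : ℝ) : ℂ) • e (n + 1, r, s))
    (hC : ∀ (n : ℕ) (r s : ℤ), C (e (n, r, s)) = (w ^ n) • e (n, r + ε, s))
    (hZ : ∀ (k n : ℕ) (r s : ℤ), (Z ^ k) (e (n, r, s)) =
      ((‖q‖ ^ (2 * n * k) : ℝ) : ℂ) • e (n, r, s))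
    (p d k₁ k₂ : ℕ) :
    ∃ S : ℝ,
      haar q (Z ^ k₁ * star (A ^ p * C ^ d) * (A ^ p * C ^ d) * Z ^ k₂) = (S : ℂ) ∧
      haar q ((A ^ p * C ^ d) * Z ^ (k₁ + k₂) * star (A ^ p * C ^ d)) =
        ((‖q‖ ^ (2 * p) * S : ℝ) : ℂ) := by
  set t : ℝ := ‖q‖ with ht
  have hstarE : star (A ^ p * C ^ d) = (star C) ^ d * (star A) ^ p := by
    rw [star_mul, star_pow, star_pow]
  set FL : ℕ → ℝ := fun n =>
    t ^ (2*n*k₁) * t ^ (2*n*k₂) * t ^ (2*(n*d)) * (sA t p n)^2 with hFL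
  set FR : ℕ → ℝ := fun n => if n < p then 0 else
    t ^ (2*(n-p)*(k₁+k₂)) * t ^ (2*((n-p)*d)) * (sA t p (n-p))^2 with hFR
  have hLn : ∀ n : ℕ,
      inner (𝕜 := ℂ) (e (n,0,0))
        ((Z ^ k₁ * star (A ^ p * C ^ d) * (A ^ p * C ^ d) * Z ^ k₂) (e (n,0,0)))
      = ((FL n : ℝ) : ℂ) := by
    intro n
    simp only [ContinuousLinearMap.mul_apply, hstarE, hZ, map_smul,
      shift_pow C w ε hC, star_shift_pow C w ε hC, raise_pow A t hA,
      star_raise_pow A t hA, smul_smul, Nat.add_sub_cancel, zero_add, sub_self]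
    rw [inner_e_smul, if_pos rfl, hFL]
    rw [sA'_shift]
    push_cast
    linear_combination ((t:ℂ) ^ (2*n*k₁) * (t:ℂ) ^ (2*n*k₂) * ((sA t p n : ℝ):ℂ)^2) *
      mulconj w q hw (n*d)
  have hRn : ∀ n : ℕ,
      inner (𝕜 := ℂ) (e (n,0,0))
        (((A ^ p * C ^ d) * Z ^ (k₁+k₂) * star (A ^ p * C ^ d)) (e (n,0,0)))
      = ((FR n : ℝ) : ℂ) := by
    intro n
    simp only [ContinuousLinearMap.mul_apply, hstarE, hZ, map_smul,
      shift_pow C w ε hC, star_shift_pow C w ε hC, raise_pow A t hA,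
      star_raise_pow A t hA, smul_smul, zero_sub, neg_add_cancel]
    rw [inner_e_smul]
    simp only [hFR]
    by_cases hn : n < p
    · rw [sA'_eq_zero t p n hn]
      simp [if_pos hn]
    · have hpn : p ≤ n := le_of_not_gt hn
      rw [Nat.sub_add_cancel hpn, if_pos rfl, if_neg hn, sA'_eq t p n hpn]
      push_cast
      linear_combination ((t:ℂ) ^ (2*(n-p)*(k₁+k₂)) * ((sA t p (n-p) : ℝ):ℂ)^2) *
        mulconj w q hw ((n-p)*d)
  refine ⟨(1 - t^2) * ∑' n : ℕ, t ^ (2*n) * FL n, ?_, ?_⟩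
  · exact haar_ofReal q _ FL hLn
  · rw [haar_ofReal q _ FR hRn, Complex.ofReal_inj]
    have hsum : (∑' n : ℕ, t ^ (2*n) * FR n) = t^(2*p) * ∑' n : ℕ, t ^ (2*n) * FL n := by
      have hinj : Function.Injective (fun m : ℕ => m + p) := fun a b h => by
        simpa using h
      have hsupp : Function.support (fun n : ℕ => t ^ (2*n) * FR n) ⊆
          Set.range (fun m : ℕ => m + p) := by
        intro x hx
        rcases le_or_gt p x with h | h
        · refine ⟨x - p, ?_⟩
          show x - p + p = x
          omega
        · exfalso
          apply hx
          rw [hFR]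
          simp [if_pos h]
      rw [← Function.Injective.tsum_eq hinj hsupp, ← tsum_mul_left]
      apply tsum_congr
      intro m
      simp only [hFR, hFL, Nat.add_sub_cancel, if_neg (by omega : ¬ m + p < p)]
      rw [show 2*(m+p) = 2*m + 2*p by ring, pow_add,
        show 2*m*(k₁+k₂) = 2*m*k₁ + 2*m*k₂ by ring, pow_add]
      ring
    rw [hsum]
    ring

lemma case_neg (q : ℂ) (A C Z : H →L[ℂ] H) (w : ℂ) (hw : ‖w‖ = ‖q‖)
    (ε : ℤ)
    (hA : ∀ (n : ℕ) (r s : ℤ), A (e (n, r, s)) =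
      ((Real.sqrt (1 - ‖q‖ ^ (2 * (n + 1))) : ℝ) : ℂ) • e (n + 1, r, s))
    (hC : ∀ (n : ℕ) (r s : ℤ), C (e (n, r, s)) = (w ^ n) • e (n, r + ε, s))
    (hZ : ∀ (k n : ℕ) (r s : ℤ), (Z ^ k) (e (n, r, s)) =
      ((‖q‖ ^ (2 * n * k) : ℝ) : ℂ) • e (n, r, s))
    (p d k₁ k₂ : ℕ) :
    ∃ S : ℝ,
      haar q (Z ^ k₁ * star (C ^ d * (star A) ^ p) * (C ^ d * (star A) ^ p) * Z ^ k₂) =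
        ((‖q‖ ^ (2 * p) * S : ℝ) : ℂ) ∧
      haar q ((C ^ d * (star A) ^ p) * Z ^ (k₁ + k₂) * star (C ^ d * (star A) ^ p)) =
        (S : ℂ) := by
  set t : ℝ := ‖q‖ with ht
  have hstarE : star (C ^ d * (star A) ^ p) = A ^ p * (star C) ^ d := by
    rw [star_mul, star_pow, star_pow, star_star]
  set FL : ℕ → ℝ := fun n => if n < p then 0 else
    t ^ (2*n*k₁) * t ^ (2*n*k₂) * t ^ (2*((n-p)*d)) * (sA t p (n-p))^2 with hFL
  set FR : ℕ → ℝ := fun n =>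
    t ^ (2*(n+p)*(k₁+k₂)) * t ^ (2*(n*d)) * (sA t p n)^2 with hFR
  have hLn : ∀ n : ℕ,
      inner (𝕜 := ℂ) (e (n,0,0))
        ((Z ^ k₁ * star (C ^ d * (star A) ^ p) * (C ^ d * (star A) ^ p) * Z ^ k₂) (e (n,0,0)))
      = ((FL n : ℝ) : ℂ) := by
    intro n
    simp only [ContinuousLinearMap.mul_apply, hstarE, hZ, map_smul,
      shift_pow C w ε hC, star_shift_pow C w ε hC, raise_pow A t hA,
      star_raise_pow A t hA, smul_smul, zero_add, sub_self]
    rw [inner_e_smul]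
    simp only [hFL]
    by_cases hn : n < p
    · rw [sA'_eq_zero t p n hn]
      simp [if_pos hn]
    · have hpn : p ≤ n := le_of_not_gt hn
      rw [Nat.sub_add_cancel hpn, if_pos rfl, if_neg hn, sA'_eq t p n hpn]
      push_cast
      linear_combination ((t:ℂ) ^ (2*n*k₁) * (t:ℂ) ^ (2*n*k₂) * ((sA t p (n-p) : ℝ):ℂ)^2) *
        mulconj w q hw ((n-p)*d)
  have hRn : ∀ n : ℕ,
      inner (𝕜 := ℂ) (e (n,0,0))
        (((C ^ d * (star A) ^ p) * Z ^ (k₁+k₂) * star (C ^ d * (star A) ^ p)) (e (n,0,0)))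
      = ((FR n : ℝ) : ℂ) := by
    intro n
    simp only [ContinuousLinearMap.mul_apply, hstarE, hZ, map_smul,
      shift_pow C w ε hC, star_shift_pow C w ε hC, raise_pow A t hA,
      star_raise_pow A t hA, smul_smul, zero_sub, neg_add_cancel, Nat.add_sub_cancel]
    rw [inner_e_smul, if_pos rfl]
    simp only [hFR]
    rw [sA'_shift]
    push_cast
    linear_combination ((t:ℂ) ^ (2*(n+p)*(k₁+k₂)) * ((sA t p n : ℝ):ℂ)^2) *
      mulconj w q hw (n*d)
  refine ⟨(1 - t^2) * ∑' n : ℕ, t ^ (2*n) * FR n, ?_, ?_⟩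
  · rw [haar_ofReal q _ FL hLn, Complex.ofReal_inj]
    have hsum : (∑' n : ℕ, t ^ (2*n) * FL n) = t^(2*p) * ∑' n : ℕ, t ^ (2*n) * FR n := by
      have hinj : Function.Injective (fun m : ℕ => m + p) := fun a b h => by
        simpa using h
      have hsupp : Function.support (fun n : ℕ => t ^ (2*n) * FL n) ⊆
          Set.range (fun m : ℕ => m + p) := by
        intro x hx
        rcases le_or_gt p x with h | h
        · refine ⟨x - p, ?_⟩
          show x - p + p = x
          omega
        · exfalso
          apply hx
          rw [hFL]
          simp [if_pos h]
      rw [← Function.Injective.tsum_eq hinj hsupp, ← tsum_mul_left]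
      apply tsum_congr
      intro m
      simp only [hFL, hFR, Nat.add_sub_cancel, if_neg (by omega : ¬ m + p < p)]
      rw [show 2*(m+p) = 2*m + 2*p by ring, pow_add,
        show (2*m+2*p)*(k₁+k₂) = (2*m+2*p)*k₁ + (2*m+2*p)*k₂ by ring, pow_add]
      ring
    rw [hsum]
    ring
  · exact haar_ofReal q _ FR hRn


lemma fac_pos (t : ℝ) (M : ℤ) (p : ℕ) (h : M = 2 * (p : ℤ)) :
    ((t : ℂ)) ^ (-M) = (((t ^ (2 * p) : ℝ))⁻¹ : ℂ) := by
  rw [h, show -(2 * (p : ℤ)) = -((2 * p : ℕ) : ℤ) by push_cast; ring, zpow_neg, zpow_natCast]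
  push_cast
  ring

lemma fac_neg (t : ℝ) (M : ℤ) (p : ℕ) (h : -M = 2 * (p : ℤ)) :
    ((t : ℂ)) ^ (-M) = ((t ^ (2 * p) : ℝ) : ℂ) := by
  rw [show -M = ((2 * p : ℕ) : ℤ) by push_cast; omega, zpow_natCast]
  push_cast
  ring

/-- relation between the left and right inner products on
`E_{m,n}·ζ^{k}`-type elements, where `ζ = BB*`:
`⟨E_{m,n}ζ^{k₁}, E_{m,n}ζ^{k₂}⟩_L = |q|^{-m-n} ⟨E_{m,n}ζ^{k₁}, E_{m,n}ζ^{k₂}⟩_R`. -/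
theorem stmt14 (q : ℂ) (hq0 : 0 < ‖q‖) (hq1 : ‖q‖ < 1)
    (A B D : H →L[ℂ] H)
    (hA : ∀ (n : ℕ) (r s : ℤ), A (e (n, r, s)) =
      ((Real.sqrt (1 - ‖q‖ ^ (2 * (n + 1))) : ℝ) : ℂ) • e (n + 1, r, s))
    (hB : ∀ (n : ℕ) (r s : ℤ), B (e (n, r, s)) = (q ^ n) • e (n, r + 1, s))
    (hD : ∀ (n : ℕ) (r s : ℤ), D (e (n, r, s)) =
      ((conj q / (‖q‖ : ℂ)) ^ (2 * r)) • e (n, r, s + 1)) :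
    ∀ (m n : ℤ), Even (m - n) → ∀ k₁ k₂ : ℕ,
      haar q ((B * star B) ^ k₁ * star (Emn A B m n) * Emn A B m n * (B * star B) ^ k₂) =
        (‖q‖ : ℂ) ^ (-(m + n)) *
          conj (haar q (Emn A B m n * (B * star B) ^ (k₁ + k₂) * star (Emn A B m n))) := by
  
  intro M N hMN k₁ k₂
  obtain ⟨c, hc⟩ := hMN
  have ht0 : ‖q‖ ≠ 0 := ne_of_gt hq0
  have hZ1 : ∀ (n : ℕ) (r s : ℤ), (B * star B) (e (n, r, s)) =
      ((‖q‖ ^ (2 * n) : ℝ) : ℂ) • e (n, r, s) := by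
    intro n r s
    rw [ContinuousLinearMap.mul_apply, star_shift B q 1 hB, map_smul, hB, smul_smul,
      sub_add_cancel, mul_comm, mulconj q q rfl n]
    norm_num
  have hZ : ∀ (k n : ℕ) (r s : ℤ), ((B * star B) ^ k) (e (n, r, s)) =
      ((‖q‖ ^ (2 * n * k) : ℝ) : ℂ) • e (n, r, s) := by
    intro k n r s
    rw [diag_pow (B * star B) (fun n => ‖q‖ ^ (2 * n)) hZ1 k n r s,
      show ‖q‖ ^ (2 * n * k) = (‖q‖ ^ (2 * n)) ^ k from pow_mul _ _ _]
  have hC2 : ∀ (n : ℕ) (r s : ℤ), (star B) (e (n, r, s)) =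
      ((conj q) ^ n) • e (n, r + (-1 : ℤ), s) := by
    intro n r s
    rw [star_shift B q 1 hB, sub_eq_add_neg]
  by_cases h1 : 0 ≤ M + N
  · have hp2 : M + N = 2 * ((((M + N) / 2).toNat : ℕ) : ℤ) := by omega
    by_cases h2 : N ≤ M
    · simp only [Emn, if_pos h1, if_pos h2]
      obtain ⟨S, hL, hR⟩ := case_pos q A B (B * star B) q rfl 1 hA hB hZ
        ((M + N) / 2).toNat ((M - N) / 2).toNat k₁ k₂
      rw [hL, hR, Complex.conj_ofReal, fac_pos (‖q‖) (M + N) _ hp2]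
      rw [Complex.ofReal_mul, ← mul_assoc,
        inv_mul_cancel₀ (Complex.ofReal_ne_zero.mpr (pow_ne_zero _ ht0)), one_mul]
    · simp only [Emn, if_pos h1, if_neg h2]
      obtain ⟨S, hL, hR⟩ := case_pos q A (star B) (B * star B) (conj q)
        (Complex.norm_conj q) (-1) hA hC2 hZ
        ((M + N) / 2).toNat ((N - M) / 2).toNat k₁ k₂
      rw [hL, hR, Complex.conj_ofReal, fac_pos (‖q‖) (M + N) _ hp2]
      rw [Complex.ofReal_mul, ← mul_assoc,
        inv_mul_cancel₀ (Complex.ofReal_ne_zero.mpr (pow_ne_zero _ ht0)), one_mul]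
  · have hp2 : -(M + N) = 2 * ((((-(M + N)) / 2).toNat : ℕ) : ℤ) := by omega
    by_cases h2 : N ≤ M
    · simp only [Emn, if_neg h1, if_pos h2]
      obtain ⟨S, hL, hR⟩ := case_neg q A B (B * star B) q rfl 1 hA hB hZ
        ((-(M + N)) / 2).toNat ((M - N) / 2).toNat k₁ k₂
      rw [hL, hR, Complex.conj_ofReal, fac_neg (‖q‖) (M + N) _ hp2]
      push_cast
      ring
    · simp only [Emn, if_neg h1, if_neg h2]
      obtain ⟨S, hL, hR⟩ := case_neg q A (star B) (B * star B) (conj q)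
        (Complex.norm_conj q) (-1) hA hC2 hZ
        ((-(M + N)) / 2).toNat ((N - M) / 2).toNat k₁ k₂
      rw [hL, hR, Complex.conj_ofReal, fac_neg (‖q‖) (M + N) _ hp2]
      push_cast
      ring
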